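/- Let f : (0,∞) → R be differentiable such that s ↦ s·f'(s) is monotonically increasing on (0,∞). Then for all vectors u, v ∈ R^n with strictly positive entries, ∑_{i=1}^n f(u_i^↑ v_i^↓) ≤ ∑_{i=1}^n f(u_i v_i) ≤ ∑_{i=1}^n f(u_i^↓ v_i^↓). -/

import Mathlib

/-!
Write `u i = exp (x i)` and `v i = exp (y i)`. The hypothesis says that `G = f ∘ exp` has the
monotone derivative `t ↦ exp t * f' (exp t)`, so `(a, c) ↦ G (a + c)` is supermodular. For a
supermodular summand `φ`, the sum `∑ i, φ (x i) (y (σ i))` over permutations `σ` is largest when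
`x` and `y ∘ σ` are similarly ordered and smallest when they are oppositely ordered: this is the
swapping argument behind the classical rearrangement inequality (the case `φ a c = a * c`).
-/

/-- The vector `u` sorted in non-decreasing order. -/
noncomputable def sortAsc {n : ℕ} (u : Fin n → ℝ) : Fin n → ℝ := u ∘ Tuple.sort u

/-- The vector `u` sorted in non-increasing order. -/
noncomputable def sortDesc {n : ℕ} (u : Fin n → ℝ) : Fin n → ℝ := sortAsc u ∘ Fin.rev

open Equiv Equiv.Perm Finset Function OrderDual

def Supermodular {α β M : Type*} [Preorder α] [Preorder β] [Add M] [LE M] (φ : α → β → M) :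
    Prop :=
  ∀ ⦃a b c d⦄, b ≤ a → d ≤ c → φ a d + φ b c ≤ φ a c + φ b d

theorem Supermodular.dual {α β M : Type*} [Preorder α] [Preorder β] [Add M] [LE M]
    {φ : α → β → M} (hφ : Supermodular φ) :
    Supermodular fun a (c : βᵒᵈ) ↦ toDual (φ a (ofDual c)) :=
  fun _ _ _ _ hba hdc ↦ hφ hba hdc

section Rearrangement

variable {ι α β M : Type*} [LinearOrder α] [LinearOrder β]
  [AddCommMonoid M] [PartialOrder M] [IsOrderedAddMonoid M] {φ : α → β → M}

theorem MonovaryOn.sum_comp_perm_le_sum_of_supermodular (hφ : Supermodular φ)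
    {s : Finset ι} {σ : Perm ι} {f : ι → α} {g : ι → β} (hfg : MonovaryOn f g s)
    (hσ : {x | σ x ≠ x} ⊆ s) : ∑ i ∈ s, φ (f i) (g (σ i)) ≤ ∑ i ∈ s, φ (f i) (g i) := by
  classical
  -- Peel off the element `a` that is lexicographically largest for `(g, f)`; after composing `σ`
  -- with the swap of `a` and `σ a`, supermodularity pays for the exchange at `a` and `σ⁻¹ a`.
  induction s using induction_on_max_value fun i ↦ toLex (g i, f i) generalizing σ with
  | empty => simp only [le_rfl, Finset.sum_empty]
  | insert a s has hamax hind => ?_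
  have hτs : {x | (swap a (σ a) * σ) x ≠ x} ⊆ s := fun x hx ↦
    have ⟨hσx, hxa⟩ := ne_and_ne_of_swap_mul_apply_ne_self hx
    mem_of_mem_insert_of_ne (hσ hσx) hxa
  specialize hind (hfg.subset <| subset_insert _ _) hτs
  simp_rw [sum_insert has]
  grw [← hind]
  obtain hσa | hσa := eq_or_ne a (σ a)
  · rw [← hσa, swap_self, ← Perm.one_def, one_mul]
  have h1s : σ.symm a ∈ s := by
    rw [Ne, ← inv_eq_iff_eq] at hσa
    refine mem_of_mem_insert_of_ne (hσ fun h ↦ hσa ?_) hσa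
    rwa [apply_symm_apply, eq_comm] at h
  simp only [← s.sum_erase_add _ h1s, add_comm]
  rw [← add_assoc, ← add_assoc]
  simp only [Perm.mul_apply, swap_apply_left, apply_symm_apply]
  refine add_le_add (hφ ?_ ?_) (sum_congr rfl fun x hx ↦ ?_).le
  · specialize hamax (σ.symm a) h1s
    rw [Prod.Lex.toLex_le_toLex] at hamax
    rcases hamax with hamax | hamax
    · exact hfg (mem_insert_of_mem h1s) (mem_insert_self _ _) hamax
    · exact hamax.2
  · specialize hamax (σ a) (mem_of_mem_insert_of_ne (hσ <| σ.injective.ne hσa.symm) hσa.symm)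
    rw [Prod.Lex.toLex_le_toLex] at hamax
    rcases hamax with hamax | hamax
    · exact hamax.le
    · exact hamax.1.le
  · rw [mem_erase, Ne, eq_symm_apply] at hx
    rw [swap_apply_of_ne_of_ne hx.1 (σ.injective.ne _)]
    rintro rfl
    exact has hx.2

variable [Fintype ι] {f : ι → α} {g : ι → β} {σ τ : Perm ι}

theorem Monovary.sum_le_sum_comp_perm_of_supermodular (hφ : Supermodular φ)
    (hfg : Monovary (f ∘ σ) (g ∘ τ)) : ∑ i, φ (f i) (g i) ≤ ∑ i, φ (f (σ i)) (g (τ i)) :=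
  calc ∑ i, φ (f i) (g i) = ∑ i, φ ((f ∘ σ) i) ((g ∘ τ) ((τ⁻¹ * σ) i)) := by
        rw [← Equiv.sum_comp σ]; simp
    _ ≤ _ := (hfg.monovaryOn _).sum_comp_perm_le_sum_of_supermodular hφ fun _ _ ↦ mem_univ _

theorem Antivary.sum_comp_perm_le_sum_of_supermodular (hφ : Supermodular φ)
    (hfg : Antivary (f ∘ σ) (g ∘ τ)) : ∑ i, φ (f (σ i)) (g (τ i)) ≤ ∑ i, φ (f i) (g i) :=
  hfg.dual_right.sum_le_sum_comp_perm_of_supermodular hφ.dual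

end Rearrangement

open Real

theorem Monotone.supermodular_comp_add {G G' : ℝ → ℝ} (hG' : Monotone G')
    (hG : ∀ t, HasDerivAt G (G' t) t) : Supermodular fun a c : ℝ ↦ G (a + c) := by
  intro a b c d hba hdc
  have hdiff : Monotone fun t ↦ G (t + (a - b)) - G t :=
    monotone_of_hasDerivAt_nonneg (fun t ↦ ((hG _).comp_add_const t _).sub (hG t))
      fun t ↦ sub_nonneg.2 (hG' (by linarith))
  have := hdiff (show b + d ≤ b + c by linarith)
  dsimp only at this ⊢
  rw [show b + d + (a - b) = a + d by ring, show b + c + (a - b) = a + c by ring] at this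
  linarith

theorem supermodular_comp_exp_add {f f' : ℝ → ℝ}
    (hderiv : ∀ s ∈ Set.Ioi (0 : ℝ), HasDerivAt f (f' s) s)
    (hmono : MonotoneOn (fun s ↦ s * f' s) (Set.Ioi 0)) :
    Supermodular fun a c : ℝ ↦ f (exp (a + c)) :=
  Monotone.supermodular_comp_add (G := f ∘ exp)
    (fun _ _ h ↦ hmono (exp_pos _) (exp_pos _) (exp_le_exp.2 h))
    fun t ↦ by simpa only [mul_comm] using (hderiv _ (exp_pos t)).comp t (hasDerivAt_exp t)

section PositiveVectors

variable {ι : Type*} [Fintype ι] {f : ℝ → ℝ} {u v : ι → ℝ} {σ τ : Perm ι}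

theorem Monovary.sum_map_mul_le_sum_map_mul_comp_perm
    (hf : Supermodular fun a c : ℝ ↦ f (exp (a + c))) (hu : ∀ i, 0 < u i) (hv : ∀ i, 0 < v i)
    (huv : Monovary (u ∘ σ) (v ∘ τ)) : ∑ i, f (u i * v i) ≤ ∑ i, f (u (σ i) * v (τ i)) := by
  have hlog : Monovary ((log ∘ u) ∘ σ) ((log ∘ v) ∘ τ) := fun i j h ↦
    log_le_log (hu _) (huv ((log_lt_log_iff (hv _) (hv _)).1 h))
  simpa only [comp_apply, exp_add, exp_log (hu _), exp_log (hv _)]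
    using hlog.sum_le_sum_comp_perm_of_supermodular hf

theorem Antivary.sum_map_mul_comp_perm_le_sum_map_mul
    (hf : Supermodular fun a c : ℝ ↦ f (exp (a + c))) (hu : ∀ i, 0 < u i) (hv : ∀ i, 0 < v i)
    (huv : Antivary (u ∘ σ) (v ∘ τ)) : ∑ i, f (u (σ i) * v (τ i)) ≤ ∑ i, f (u i * v i) := by
  have hlog : Antivary ((log ∘ u) ∘ σ) ((log ∘ v) ∘ τ) := fun i j h ↦
    log_le_log (hu _) (huv ((log_lt_log_iff (hv _) (hv _)).1 h))
  simpa only [comp_apply, exp_add, exp_log (hu _), exp_log (hv _)]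
    using hlog.sum_comp_perm_le_sum_of_supermodular hf

end PositiveVectors

theorem antitone_sortDesc {n : ℕ} (u : Fin n → ℝ) : Antitone (sortDesc u) :=
  fun _ _ h ↦ Tuple.monotone_sort u (Fin.rev_le_rev.2 h)

/-- Vector rearrangement inequality for `f` with `s ↦ s * f' s` increasing. -/
theorem vector_rearrangement_increasing {n : ℕ} (f f' : ℝ → ℝ)
    (hderiv : ∀ s ∈ Set.Ioi (0 : ℝ), HasDerivAt f (f' s) s)
    (hmono : MonotoneOn (fun s => s * f' s) (Set.Ioi 0))
    (u v : Fin n → ℝ) (hu : ∀ i, 0 < u i) (hv : ∀ i, 0 < v i) :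
    ∑ i, f (sortAsc u i * sortDesc v i) ≤ ∑ i, f (u i * v i) ∧
      ∑ i, f (u i * v i) ≤ ∑ i, f (sortDesc u i * sortDesc v i) := by
  have hf := supermodular_comp_exp_add hderiv hmono
  have hDu := antitone_sortDesc u
  have hDv := antitone_sortDesc v
  constructor
  · exact ((Tuple.monotone_sort u).antivary hDv).sum_map_mul_comp_perm_le_sum_map_mul
      (σ := Tuple.sort u) (τ := Fin.revPerm.trans (Tuple.sort v)) hf hu hv
  · exact (hDu.monovary hDv).sum_map_mul_le_sum_map_mul_comp_perm
      (σ := Fin.revPerm.trans (Tuple.sort u)) (τ := Fin.revPerm.trans (Tuple.sort v)) hf hu hv
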